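/- arXiv:1809.01283 — 2 statements merged into one kernel-verified Lean document; each statement's English description precedes it below -/
import Mathlib

section
/- Let c(x,y) = a·(1 + ρ·((h_x·x + h_y·y)/d)^σ) with a, ρ, d > 0, h_x, h_y > 0, natural σ ≥ 1, and max(h_x/h_y, h_y/h_x) ≤ k. Then for all x,y,v,w ≥ 0 with x+y = v+w, c(x,y) ≤ k^σ · c(v,w). -/
/-!
On a road carrying a total flow `x + y = v + w`, the headway-weighted flow `hx * x + hy * y` lies
between `min hx hy * (x + y)` and `max hx hy * (x + y)`, and the bound on the headway ratios says
`max hx hy ≤ k * min hx hy`; so swapping vehicle types scales the weighted flow by at most `k`.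
Since the cost is `a * (1 + ρ * t ^ σ)` in the weighted flow `t` and `1 ≤ k`, it scales by at
most `k ^ σ`.
-/

lemma max_le_mul_min_of_max_div_le {p q k : ℝ} (hp : 0 < p) (hq : 0 < q)
    (hk : max (p / q) (q / p) ≤ k) : max p q ≤ k * min p q := by
  rcases le_total p q with h | h
  · rw [max_eq_right h, min_eq_left h, ← div_le_iff₀ hp]
    exact (le_max_right _ _).trans hk
  · rw [max_eq_left h, min_eq_right h, ← div_le_iff₀ hq]
    exact (le_max_left _ _).trans hk

lemma one_le_of_max_le_mul_min {p q k : ℝ} (hp : 0 < p) (hq : 0 < q)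
    (hk : max p q ≤ k * min p q) : 1 ≤ k := by
  have hmin : 0 < min p q := lt_min hp hq
  rw [← div_le_iff₀ hmin] at hk
  exact ((one_le_div hmin).2 min_le_max).trans hk

lemma mul_add_mul_le_max_mul_add {p q x y : ℝ} (hx : 0 ≤ x) (hy : 0 ≤ y) :
    p * x + q * y ≤ max p q * (x + y) := by
  rw [mul_add]
  gcongr
  exacts [le_max_left _ _, le_max_right _ _]

lemma min_mul_add_le_mul_add_mul {p q x y : ℝ} (hx : 0 ≤ x) (hy : 0 ≤ y) :
    min p q * (x + y) ≤ p * x + q * y := by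
  rw [mul_add]
  gcongr
  exacts [min_le_left _ _, min_le_right _ _]

lemma mul_add_mul_le_mul_of_add_eq {p q k x y v w : ℝ} (hk : 0 ≤ k)
    (hpq : max p q ≤ k * min p q) (hx : 0 ≤ x) (hy : 0 ≤ y) (hv : 0 ≤ v) (hw : 0 ≤ w)
    (hsum : x + y = v + w) :
    p * x + q * y ≤ k * (p * v + q * w) :=
  calc p * x + q * y ≤ max p q * (x + y) := mul_add_mul_le_max_mul_add hx hy
    _ ≤ k * min p q * (v + w) := by rw [hsum]; gcongr
    _ = k * (min p q * (v + w)) := mul_assoc _ _ _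
    _ ≤ k * (p * v + q * w) := by gcongr; exact min_mul_add_le_mul_add_mul hv hw

lemma one_add_mul_pow_le_pow_mul {ρ s t k : ℝ} (σ : ℕ) (hρ : 0 ≤ ρ) (hs : 0 ≤ s)
    (hk : 1 ≤ k) (hst : s ≤ k * t) :
    1 + ρ * s ^ σ ≤ k ^ σ * (1 + ρ * t ^ σ) := by
  have hpow : s ^ σ ≤ k ^ σ * t ^ σ := mul_pow k t σ ▸ pow_le_pow_left₀ hs hst σ
  have hkσ : 1 ≤ k ^ σ := one_le_pow₀ hk
  calc 1 + ρ * s ^ σ ≤ k ^ σ + ρ * (k ^ σ * t ^ σ) := by gcongr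
    _ = k ^ σ * (1 + ρ * t ^ σ) := by ring

theorem swap_cost_bound_general (a ρ d hx hy k : ℝ) (σ : ℕ) (ha : 0 < a) (hρ : 0 < ρ) (hd : 0 < d)
    (hhx : 0 < hx) (hhy : 0 < hy) (hk : max (hx / hy) (hy / hx) ≤ k)
    (c : ℝ → ℝ → ℝ) (hc : ∀ x y, c x y = a * (1 + ρ * ((hx * x + hy * y) / d) ^ σ)) :
    ∀ x y v w : ℝ, 0 ≤ x → 0 ≤ y → 0 ≤ v → 0 ≤ w → x + y = v + w →
      c x y ≤ k ^ σ * c v w := by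
  intro x y v w hx0 hy0 hv0 hw0 hsum
  have hmax := max_le_mul_min_of_max_div_le hhx hhy hk
  have hk1 := one_le_of_max_le_mul_min hhx hhy hmax
  have hflow : hx * x + hy * y ≤ k * (hx * v + hy * w) :=
    mul_add_mul_le_mul_of_add_eq (by linarith) hmax hx0 hy0 hv0 hw0 hsum
  have hscaled : (hx * x + hy * y) / d ≤ k * ((hx * v + hy * w) / d) := by
    rw [← mul_div_assoc]
    gcongr
  rw [hc, hc, mul_left_comm]
  gcongr
  exact one_add_mul_pow_le_pow_mul σ hρ.le (by positivity) hk1 hscaled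

theorem swap_cost_bound (a ρ d hx hy k : ℝ) (σ : ℕ) (ha : 0 < a) (hρ : 0 < ρ) (hd : 0 < d)
    (hhx : 0 < hx) (hhy : 0 < hy) (hσ : 1 ≤ σ) (hk : max (hx / hy) (hy / hx) ≤ k)
    (c : ℝ → ℝ → ℝ) (hc : ∀ x y, c x y = a * (1 + ρ * ((hx * x + hy * y) / d) ^ σ)) :
    ∀ x y v w : ℝ, 0 ≤ x → 0 ≤ y → 0 ≤ v → 0 ≤ w → x + y = v + w →
      c x y ≤ k ^ σ * c v w :=
  swap_cost_bound_general a ρ d hx hy k σ ha hρ hd hhx hhy hk c hc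
end

section
/- For a polynomial separable cost c(f) = a·(1 + ρ·(f/d)^σ) with a, ρ, d > 0 and natural σ ≥ 1, for all f, q ≥ 0 with q > 0: (c(q) − c(f))·f ≤ ξ(σ)·c(q)·q, where ξ(σ) = σ·(σ+1)^(-(σ+1)/σ). -/
noncomputable def xi (σ : ℝ) : ℝ := σ * (σ + 1) ^ (-(σ + 1) / σ)

/-!
After the substitution `X = f / d`, `Y = q / d`, the left-hand side is `a ρ d · X (Y^σ - X^σ)`,
and Young's inequality with exponents `σ + 1` and `(σ + 1) / σ` bounds `X · Y^σ` by
`X^(σ+1) + ξ(σ) Y^(σ+1)`; the constant `ξ(σ)` is exactly `max_X (X Y^σ - X^(σ+1)) / Y^(σ+1)`.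
The remaining term `a d ξ(σ) Y` of `ξ(σ) c(q) q` is nonnegative.
-/

open Real

lemma xi_nonneg {s : ℝ} (hs : 0 ≤ s) : 0 ≤ xi s :=
  mul_nonneg hs (rpow_nonneg (by linarith) _)

lemma mul_rpow_le_rpow_add_xi_mul_rpow {s : ℝ} (hs : 0 < s) {x y : ℝ} (hx : 0 ≤ x)
    (hy : 0 ≤ y) : x * y ^ s ≤ x ^ (s + 1) + xi s * y ^ (s + 1) := by
  have hs1 : 0 < s + 1 := by linarith
  have hpq : (s + 1).HolderConjugate ((s + 1) / s) := by
    rw [holderConjugate_iff]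
    exact ⟨by linarith, by field_simp; ring⟩
  -- `μ` balances the two Young terms so that the first one is exactly `x ^ (s + 1)`.
  set μ : ℝ := (s + 1) ^ (s + 1)⁻¹ with hμ
  have hμ_pos : 0 < μ := rpow_pos_of_pos hs1 _
  have hys : 0 ≤ y ^ s := rpow_nonneg hy s
  have hμ_pow : μ ^ (s + 1) = s + 1 := by
    rw [hμ, ← rpow_mul hs1.le, inv_mul_cancel₀ hs1.ne', rpow_one]
  have first_term : (μ * x) ^ (s + 1) / (s + 1) = x ^ (s + 1) := by
    rw [mul_rpow hμ_pos.le hx, hμ_pow]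
    field_simp
  have second_term :
      (y ^ s / μ) ^ ((s + 1) / s) / ((s + 1) / s) = xi s * y ^ (s + 1) := by
    have e1 : s * ((s + 1) / s) = s + 1 := by field_simp
    have e2 : (s + 1)⁻¹ * ((s + 1) / s) = 1 / s := by field_simp
    have e3 : -(s + 1) / s = -(1 / s) + -1 := by field_simp; ring
    rw [div_rpow hys hμ_pos.le, ← rpow_mul hy, hμ, ← rpow_mul hs1.le, e1, e2, xi, e3,
      rpow_add hs1, rpow_neg_one, rpow_neg hs1.le]
    field_simp
  calc x * y ^ s = (μ * x) * (y ^ s / μ) := by field_simp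
    _ ≤ (μ * x) ^ (s + 1) / (s + 1) + (y ^ s / μ) ^ ((s + 1) / s) / ((s + 1) / s) :=
      young_inequality_of_nonneg (mul_nonneg hμ_pos.le hx) (div_nonneg hys hμ_pos.le) hpq
    _ = x ^ (s + 1) + xi s * y ^ (s + 1) := by rw [first_term, second_term]

lemma mul_pow_le_pow_add_xi_mul_pow (σ : ℕ) {x y : ℝ} (hx : 0 ≤ x) (hy : 0 ≤ y) :
    x * y ^ σ ≤ x ^ (σ + 1) + xi σ * y ^ (σ + 1) := by
  rcases σ.eq_zero_or_pos with rfl | hσ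
  · simp [xi]
  · have h := mul_rpow_le_rpow_add_xi_mul_rpow (Nat.cast_pos.mpr hσ) hx hy
    rwa [← Nat.cast_add_one, rpow_natCast, rpow_natCast, rpow_natCast] at h

theorem poly_beta_bound_general (a ρ d : ℝ) (σ : ℕ) (ha : 0 < a) (hρ : 0 < ρ) (hd : 0 < d)
    (c : ℝ → ℝ) (hc : ∀ f, c f = a * (1 + ρ * (f / d) ^ σ)) :
    ∀ f q : ℝ, 0 ≤ f → 0 ≤ q → 0 < q →
      (c q - c f) * f ≤ xi σ * (c q * q) := by
  intro f q hf hq _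
  obtain ⟨X, hX, rfl⟩ : ∃ X, 0 ≤ X ∧ f = d * X := ⟨f / d, div_nonneg hf hd.le, by field_simp⟩
  obtain ⟨Y, hY, rfl⟩ : ∃ Y, 0 ≤ Y ∧ q = d * Y := ⟨q / d, div_nonneg hq hd.le, by field_simp⟩
  have hc' (Z : ℝ) : c (d * Z) = a * (1 + ρ * Z ^ σ) := by
    rw [hc, mul_div_cancel_left₀ Z hd.ne']
  calc (c (d * Y) - c (d * X)) * (d * X) = a * ρ * d * (X * Y ^ σ - X ^ (σ + 1)) := by
        rw [hc', hc']; ring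
    _ ≤ a * ρ * d * (xi σ * Y ^ (σ + 1)) := by
        gcongr; linarith [mul_pow_le_pow_add_xi_mul_pow σ hX hY]
    _ ≤ xi σ * a * d * Y + a * ρ * d * (xi σ * Y ^ (σ + 1)) :=
        le_add_of_nonneg_left (by have := xi_nonneg (Nat.cast_nonneg σ); positivity)
    _ = xi σ * (c (d * Y) * (d * Y)) := by rw [hc']; ring

theorem poly_beta_bound (a ρ d : ℝ) (σ : ℕ) (ha : 0 < a) (hρ : 0 < ρ) (hd : 0 < d)
    (hσ : 1 ≤ σ) (c : ℝ → ℝ) (hc : ∀ f, c f = a * (1 + ρ * (f / d) ^ σ)) :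
    ∀ f q : ℝ, 0 ≤ f → 0 ≤ q → 0 < q →
      (c q - c f) * f ≤ xi σ * (c q * q) :=
  poly_beta_bound_general a ρ d σ ha hρ hd c hc
end
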